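/- If I is a nonzero ideal of R and R is not an integral domain (i.e. R has a nonzero zero-divisor), then the girth of the zero-divisor graph Γ(R⋈I) equals 3. -/

import Mathlib

/-- The amalgamated duplication of a commutative ring `R` along an ideal `I`,
realized as the subring `{(a, b) : R × R | b - a ∈ I}` of the product ring `R × R`
(equivalently, `{(r, r + i) | r ∈ R, i ∈ I}`). -/
def amalg (R : Type*) [CommRing R] (I : Ideal R) : Subring (R × R) where
  carrier := {p | p.2 - p.1 ∈ I}
  zero_mem' := by simp
  one_mem' := by simp
  add_mem' := by
    intro a b ha hb
    show (a + b).2 - (a + b).1 ∈ I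
    have h : (a + b).2 - (a + b).1 = (a.2 - a.1) + (b.2 - b.1) := by
      simp only [Prod.fst_add, Prod.snd_add]; ring
    rw [h]; exact I.add_mem ha hb
  neg_mem' := by
    intro a ha
    show (-a).2 - (-a).1 ∈ I
    have h : (-a).2 - (-a).1 = -(a.2 - a.1) := by
      simp only [Prod.fst_neg, Prod.snd_neg]; ring
    rw [h]; exact I.neg_mem ha
  mul_mem' := by
    intro a b ha hb
    show (a * b).2 - (a * b).1 ∈ I
    have h : (a * b).2 - (a * b).1 = a.2 * (b.2 - b.1) + b.1 * (a.2 - a.1) := by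
      simp only [Prod.fst_mul, Prod.snd_mul]; ring
    rw [h]; exact I.add_mem (I.mul_mem_left _ hb) (I.mul_mem_left _ ha)

/-- The set of zero-divisors of a commutative ring `S`:
elements `x` such that `x * y = 0` for some `y ≠ 0`. -/
def zdSet (S : Type*) [CommRing S] : Set S := {x | ∃ y, y ≠ 0 ∧ x * y = 0}

/-- The zero-divisor graph `Γ(S)` of a commutative ring `S`: the vertices are the nonzero
zero-divisors of `S`, and distinct vertices `x`, `y` are adjacent iff `x * y = 0`. -/
def zdGraph (S : Type*) [CommRing S] : SimpleGraph {x : S // x ≠ 0 ∧ x ∈ zdSet S} where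
  Adj a b := a ≠ b ∧ (a : S) * (b : S) = 0
  symm := by
    refine ⟨?_⟩
    rintro a b ⟨h1, h2⟩
    exact ⟨h1.symm, by rwa [mul_comm]⟩
  loopless := by refine ⟨?_⟩; rintro a ⟨h, -⟩; exact h rfl


open SimpleGraph in
lemma triangle_egirth {α : Type*} (G : SimpleGraph α) {a b c : α}
    (hab : G.Adj a b) (hbc : G.Adj b c) (hca : G.Adj c a) : G.egirth = 3 := by
  refine le_antisymm ?_ three_le_egirth
  have hp : (Walk.cons hbc (Walk.cons hca Walk.nil) : G.Walk b a).IsPath := by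
    simp [Walk.isPath_def, hbc.ne, hca.ne, hab.ne']
  have hc : (Walk.cons hab (Walk.cons hbc (Walk.cons hca Walk.nil)) : G.Walk a a).IsCycle := by
    rw [Walk.cons_isCycle_iff]
    refine ⟨hp, ?_⟩
    simp [Sym2.eq_iff]
    refine ⟨⟨fun _ ↦ hbc.ne, fun h ↦ hca.ne h.symm⟩, fun _ ↦ hab.ne', hbc.ne⟩
  calc G.egirth ≤ _ := iInf_le _ a
    _ ≤ _ := iInf_le _ (Walk.cons hab (Walk.cons hbc (Walk.cons hca Walk.nil)))
    _ ≤ _ := iInf_le _ hc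
    _ = 3 := by simp [Walk.length_cons]

/-- if `I ≠ 0` and `R` is not a domain, then `girth Γ(R ⋈ I) = 3`. -/
theorem stmt5 (R : Type*) [CommRing R] [Nontrivial R] (I : Ideal R) (hI : I ≠ ⊥)
    (hR : ∃ x : R, x ≠ 0 ∧ x ∈ zdSet R) :
    (zdGraph ↥(amalg R I)).egirth = 3 := by
  -- obtain j ∈ I, j ≠ 0, z ≠ 0 with j * z = 0
  obtain ⟨x, hx0, y, hy0, hxy⟩ := hR
  obtain ⟨i, hiI, hi0⟩ : ∃ i ∈ I, i ≠ 0 := by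
    by_contra h
    push_neg at h
    exact hI (le_antisymm (fun a ha => by simpa using h a ha) bot_le)
  obtain ⟨j, hjI, hj0, z, hz0, hjz⟩ : ∃ j ∈ I, j ≠ 0 ∧ ∃ z, z ≠ 0 ∧ j * z = 0 := by
    by_cases hxi : x * i = 0
    · exact ⟨i, hiI, hi0, x, hx0, by rw [mul_comm]; exact hxi⟩
    · exact ⟨x * i, I.mul_mem_left x hiI, hxi, y, hy0,
        by rw [mul_comm x i, mul_assoc, hxy, mul_zero]⟩
  -- the three triangle vertices
  set S := amalg R I with hS
  have hA : ((j, 0) : R × R) ∈ S := by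
    show (0 : R) - j ∈ I; simpa using I.neg_mem hjI
  have hB : ((0, j) : R × R) ∈ S := by
    show j - (0 : R) ∈ I; simpa using hjI
  have hC : ((z, z) : R × R) ∈ S := by
    show z - z ∈ I; simp
  set A : S := ⟨(j, 0), hA⟩ with hAdef
  set B : S := ⟨(0, j), hB⟩ with hBdef
  set C : S := ⟨(z, z), hC⟩ with hCdef
  have hA0 : A ≠ 0 := by
    intro h
    exact hj0 (congrArg (fun p : S => (p : R × R).1) h)
  have hB0 : B ≠ 0 := by
    intro h
    exact hj0 (congrArg (fun p : S => (p : R × R).2) h)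
  have hC0 : C ≠ 0 := by
    intro h
    exact hz0 (congrArg (fun p : S => (p : R × R).1) h)
  have hAB : A * B = 0 := by
    apply Subtype.ext
    show ((j, 0) : R × R) * (0, j) = 0
    simp [Prod.ext_iff]
  have hCA : C * A = 0 := by
    apply Subtype.ext
    show ((z, z) : R × R) * (j, 0) = 0
    simp [Prod.ext_iff, mul_comm z j, hjz]
  have hBC : B * C = 0 := by
    apply Subtype.ext
    show ((0, j) : R × R) * (z, z) = 0
    simp [Prod.ext_iff, hjz]
  have hAne : A ≠ B := by
    intro h
    exact hj0 (congrArg (fun p : S => (p : R × R).1) h)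
  have hBne : B ≠ C := by
    intro h
    exact hz0 ((congrArg (fun p : S => (p : R × R).1) h).symm)
  have hCne : C ≠ A := by
    intro h
    exact hz0 (congrArg (fun p : S => (p : R × R).2) h)
  -- vertices
  set vA : {x : S // x ≠ 0 ∧ x ∈ zdSet S} := ⟨A, hA0, B, hB0, hAB⟩
  set vB : {x : S // x ≠ 0 ∧ x ∈ zdSet S} := ⟨B, hB0, C, hC0, hBC⟩
  set vC : {x : S // x ≠ 0 ∧ x ∈ zdSet S} := ⟨C, hC0, A, hA0, hCA⟩
  exact triangle_egirth _ (a := vA) (b := vB) (c := vC)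
    ⟨fun h => hAne (congrArg Subtype.val h), hAB⟩
    ⟨fun h => hBne (congrArg Subtype.val h), hBC⟩
    ⟨fun h => hCne (congrArg Subtype.val h), hCA⟩
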